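/- arXiv:2602.00596 — 2 statements merged into one kernel-verified Lean document; each statement's English description precedes it below -/
import Mathlib

section
/- Let T be a nonnegative real-valued random variable whose distribution gives positive probability to at least two distinct strictly positive values, such that E[T^n] is finite and strictly positive for every natural number n. Let ψ : [0,∞) → [0,∞) be a strictly decreasing function such that E[ψ(T)·T^n] is finite and strictly positive for every n. Define R_n = E[ψ(T)·T^n] / E[T^n]. Then the sequence (R_n) is strictly decreasing: for every n ≥ 0, R_{n+1} < R_n. -/
/-!
Symmetrize over two independent copies of `T`: with `w = T ^ n`,
`2 (E[ψ(T) T^(n+1)] E[T^n] - E[ψ(T) T^n] E[T^(n+1)]) = E[(ψ(T) - ψ(T')) (T - T') T^n T'^n]`.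
Since `ψ` is decreasing the integrand is `≤ 0`, and it is `< 0` on the rectangle where `T` is
near `a` and `T'` is near `b`, which has positive product measure.
-/

open MeasureTheory

section StrictAntiOn

variable {s : Set ℝ} {ψ : ℝ → ℝ} {x y : ℝ}

lemma StrictAntiOn.sub_mul_sub_neg (hψ : StrictAntiOn ψ s) (hx : x ∈ s) (hy : y ∈ s)
    (hxy : x ≠ y) : (ψ x - ψ y) * (x - y) < 0 := by
  rcases hxy.lt_or_gt with h | h
  · exact mul_neg_of_pos_of_neg (sub_pos.2 (hψ hx hy h)) (sub_neg.2 h)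
  · exact mul_neg_of_neg_of_pos (sub_neg.2 (hψ hy hx h)) (sub_pos.2 h)

lemma StrictAntiOn.sub_mul_sub_nonpos (hψ : StrictAntiOn ψ s) (hx : x ∈ s) (hy : y ∈ s) :
    (ψ x - ψ y) * (x - y) ≤ 0 := by
  rcases eq_or_ne x y with rfl | hxy
  · simp
  · exact (hψ.sub_mul_sub_neg hx hy hxy).le

end StrictAntiOn

section Symmetrization

variable {Ω : Type*} [MeasurableSpace Ω] {μ : Measure Ω} {f g w : Ω → ℝ}

lemma integrable_prod_sub_mul_sub_mul (hfgw : Integrable (fun x => f x * (g x * w x)) μ)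
    (hfw : Integrable (fun x => f x * w x) μ) (hgw : Integrable (fun x => g x * w x) μ)
    (hw : Integrable w μ) :
    Integrable (fun p : Ω × Ω => (f p.1 - f p.2) * (g p.1 - g p.2) * (w p.1 * w p.2))
      (μ.prod μ) := by
  have h := (((hfgw.mul_prod hw).sub (hfw.mul_prod hgw)).sub (hgw.mul_prod hfw)).add
    (hw.mul_prod hfgw)
  refine h.congr (Filter.Eventually.of_forall fun p => ?_)
  simp only [Pi.add_apply, Pi.sub_apply]
  ring

lemma integral_prod_sub_mul_sub_mul [SFinite μ]
    (hfgw : Integrable (fun x => f x * (g x * w x)) μ) (hfw : Integrable (fun x => f x * w x) μ)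
    (hgw : Integrable (fun x => g x * w x) μ) (hw : Integrable w μ) :
    ∫ p, (f p.1 - f p.2) * (g p.1 - g p.2) * (w p.1 * w p.2) ∂μ.prod μ =
      2 * ((∫ x, f x * (g x * w x) ∂μ) * (∫ x, w x ∂μ)
        - (∫ x, f x * w x ∂μ) * ∫ x, g x * w x ∂μ) := by
  have h_expand : (fun p : Ω × Ω => (f p.1 - f p.2) * (g p.1 - g p.2) * (w p.1 * w p.2)) =
      fun p => f p.1 * (g p.1 * w p.1) * w p.2 - f p.1 * w p.1 * (g p.2 * w p.2)
        - g p.1 * w p.1 * (f p.2 * w p.2) + w p.1 * (f p.2 * (g p.2 * w p.2)) := by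
    funext p
    ring
  rw [h_expand, integral_add ?_ (hw.mul_prod hfgw), integral_sub ?_ (hgw.mul_prod hfw),
    integral_sub (hfgw.mul_prod hw) (hfw.mul_prod hgw),
    integral_prod_mul (fun x => f x * (g x * w x)) w,
    integral_prod_mul (fun x => f x * w x) (fun x => g x * w x),
    integral_prod_mul (fun x => g x * w x) (fun x => f x * w x),
    integral_prod_mul w (fun x => f x * (g x * w x))]
  · ring
  · exact (hfgw.mul_prod hw).sub (hfw.mul_prod hgw)
  · exact ((hfgw.mul_prod hw).sub (hfw.mul_prod hgw)).sub (hgw.mul_prod hfw)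

end Symmetrization

lemma integral_neg_of_nonpos_of_neg_on {α : Type*} [MeasurableSpace α] {ν : Measure α}
    {F : α → ℝ} {s : Set α} (hF : Integrable F ν) (h_nonpos : ∀ᵐ x ∂ν, F x ≤ 0)
    (h_neg : ∀ x ∈ s, F x < 0) (hs : 0 < ν s) : ∫ x, F x ∂ν < 0 := by
  have h_supp : s ⊆ Function.support (-F) := fun x hx => (neg_pos.2 (h_neg x hx)).ne'
  have h_pos : 0 < ∫ x, (-F) x ∂ν :=
    (integral_pos_iff_support_of_nonneg_ae (h_nonpos.mono fun x hx => neg_nonneg.2 hx)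
      hF.neg).2 (hs.trans_le (measure_mono h_supp))
  simpa only [Pi.neg_apply, integral_neg, neg_pos] using h_pos

section Moments

variable {Ω : Type*} [MeasurableSpace Ω] {μ : Measure Ω} {T : Ω → ℝ}

lemma exists_measure_pos_sets_pos_lt_of_near {a b : ℝ} (ha : 0 < a) (hab : a < b)
    (hna : ∀ ε > (0 : ℝ), 0 < μ {ω | |T ω - a| < ε})
    (hnb : ∀ ε > (0 : ℝ), 0 < μ {ω | |T ω - b| < ε}) :
    ∃ S₁ S₂ : Set Ω, 0 < μ S₁ ∧ 0 < μ S₂ ∧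
      ∀ x ∈ S₁, ∀ y ∈ S₂, 0 < T x ∧ T x < T y := by
  set ε := min a ((b - a) / 2)
  have hε : 0 < ε := lt_min ha (by linarith)
  have hεa : ε ≤ a := min_le_left _ _
  have hεb : ε ≤ (b - a) / 2 := min_le_right _ _
  refine ⟨_, _, hna ε hε, hnb ε hε, fun x hx y hy => ?_⟩
  rw [Set.mem_ofPred_eq, abs_lt] at hx hy
  constructor <;> linarith [hx.1, hx.2, hy.1]

variable [SFinite μ] {ψ : ℝ → ℝ} {n : ℕ}

theorem integral_mul_pow_succ_mul_lt (hT : ∀ ω, 0 ≤ T ω) (hψ : StrictAntiOn ψ (Set.Ici 0))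
    {S₁ S₂ : Set Ω} (h₁ : 0 < μ S₁) (h₂ : 0 < μ S₂)
    (hS : ∀ x ∈ S₁, ∀ y ∈ S₂, 0 < T x ∧ T x < T y)
    (hT_int : Integrable (fun ω => T ω ^ n) μ)
    (hT_int_succ : Integrable (fun ω => T ω ^ (n + 1)) μ)
    (hψ_int : Integrable (fun ω => ψ (T ω) * T ω ^ n) μ)
    (hψ_int_succ : Integrable (fun ω => ψ (T ω) * T ω ^ (n + 1)) μ) :
    (∫ ω, ψ (T ω) * T ω ^ (n + 1) ∂μ) * (∫ ω, T ω ^ n ∂μ) <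
      (∫ ω, ψ (T ω) * T ω ^ n ∂μ) * ∫ ω, T ω ^ (n + 1) ∂μ := by
  simp only [pow_succ'] at hT_int_succ hψ_int_succ ⊢
  have h_sym := integral_prod_sub_mul_sub_mul (f := fun ω => ψ (T ω)) (g := T)
    hψ_int_succ hψ_int hT_int_succ hT_int
  have h_neg : ∫ p, (ψ (T p.1) - ψ (T p.2)) * (T p.1 - T p.2) * (T p.1 ^ n * T p.2 ^ n)
      ∂μ.prod μ < 0 := by
    refine integral_neg_of_nonpos_of_neg_on (s := S₁ ×ˢ S₂)
      (integrable_prod_sub_mul_sub_mul hψ_int_succ hψ_int hT_int_succ hT_int)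
      (Filter.Eventually.of_forall fun p => ?_) (fun p hp => ?_) ?_
    · exact mul_nonpos_of_nonpos_of_nonneg (hψ.sub_mul_sub_nonpos (hT p.1) (hT p.2))
        (mul_nonneg (pow_nonneg (hT p.1) n) (pow_nonneg (hT p.2) n))
    · obtain ⟨h_pos, h_lt⟩ := hS p.1 hp.1 p.2 hp.2
      exact mul_neg_of_neg_of_pos (hψ.sub_mul_sub_neg (hT p.1) (hT p.2) h_lt.ne)
        (mul_pos (pow_pos h_pos n) (pow_pos (h_pos.trans h_lt) n))
    · rw [Measure.prod_prod]
      exact ENNReal.mul_pos h₁.ne' h₂.ne'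
  linarith

end Moments

theorem keat_moment_ratio_strictAnti_general
    {Ω : Type*} {mΩ : MeasurableSpace Ω} (μ : Measure Ω) [IsProbabilityMeasure μ]
    (T : Ω → ℝ) (hT_nonneg : ∀ ω, 0 ≤ T ω)
    (h_nondeg : ∃ a b : ℝ, 0 < a ∧ a < b ∧
      (∀ ε > (0 : ℝ), 0 < μ {ω | |T ω - a| < ε}) ∧
      (∀ ε > (0 : ℝ), 0 < μ {ω | |T ω - b| < ε}))
    (ψ : ℝ → ℝ)
    (hψ_strictAnti : ∀ s t, 0 ≤ s → s < t → ψ t < ψ s)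
    (h_int : ∀ n : ℕ, Integrable (fun ω => T ω ^ n) μ)
    (h_pos : ∀ n : ℕ, 0 < ∫ ω, T ω ^ n ∂μ)
    (h_int' : ∀ n : ℕ, Integrable (fun ω => ψ (T ω) * T ω ^ n) μ)
    (R : ℕ → ℝ)
    (hR : ∀ n : ℕ, R n = (∫ ω, ψ (T ω) * T ω ^ n ∂μ) / (∫ ω, T ω ^ n ∂μ)) :
    ∀ n : ℕ, R (n + 1) < R n := by
  intro n
  obtain ⟨a, b, ha, hab, hna, hnb⟩ := h_nondeg
  obtain ⟨S₁, S₂, h₁, h₂, hS⟩ := exists_measure_pos_sets_pos_lt_of_near ha hab hna hnb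
  have hψ : StrictAntiOn ψ (Set.Ici 0) := fun s hs t _ hst => hψ_strictAnti s t hs hst
  rw [hR, hR, div_lt_div_iff₀ (h_pos (n + 1)) (h_pos n)]
  exact integral_mul_pow_succ_mul_lt hT_nonneg hψ h₁ h₂ hS (h_int n) (h_int (n + 1))
    (h_int' n) (h_int' (n + 1))

/-- **Strictly decreasing kernel-to-base moment ratios.**
If `T ≥ 0` is non-degenerate in the sense that the support of its law contains two distinct
strictly positive points (every neighborhood of each of them has positive probability),
its moments `E[T^n]` are finite and strictly positive, and `ψ : [0,∞) → [0,∞)` is strictly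
decreasing with `E[ψ(T)·T^n]` finite and strictly positive for all `n`, then
`R n = E[ψ(T)·T^n] / E[T^n]` satisfies `R (n+1) < R n` for every `n`. -/
theorem keat_moment_ratio_strictAnti
    {Ω : Type*} {mΩ : MeasurableSpace Ω} (μ : Measure Ω) [IsProbabilityMeasure μ]
    (T : Ω → ℝ) (hT_nonneg : ∀ ω, 0 ≤ T ω)
    (h_nondeg : ∃ a b : ℝ, 0 < a ∧ a < b ∧
      (∀ ε > (0 : ℝ), 0 < μ {ω | |T ω - a| < ε}) ∧
      (∀ ε > (0 : ℝ), 0 < μ {ω | |T ω - b| < ε}))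
    (ψ : ℝ → ℝ)
    (hψ_nonneg : ∀ t, 0 ≤ t → 0 ≤ ψ t)
    (hψ_strictAnti : ∀ s t, 0 ≤ s → s < t → ψ t < ψ s)
    (h_int : ∀ n : ℕ, Integrable (fun ω => T ω ^ n) μ)
    (h_pos : ∀ n : ℕ, 0 < ∫ ω, T ω ^ n ∂μ)
    (h_int' : ∀ n : ℕ, Integrable (fun ω => ψ (T ω) * T ω ^ n) μ)
    (h_pos' : ∀ n : ℕ, 0 < ∫ ω, ψ (T ω) * T ω ^ n ∂μ)
    (R : ℕ → ℝ)
    (hR : ∀ n : ℕ, R n = (∫ ω, ψ (T ω) * T ω ^ n ∂μ) / (∫ ω, T ω ^ n ∂μ)) :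
    ∀ n : ℕ, R (n + 1) < R n :=
  keat_moment_ratio_strictAnti_general (mΩ := mΩ) μ T hT_nonneg h_nondeg ψ hψ_strictAnti h_int h_pos
    h_int' R hR
end

section
/- Let T be a nonnegative real-valued random variable whose distribution has unbounded support (i.e., P(T > M) > 0 for every M > 0) and such that E[T^n] is finite for every natural number n. Let ψ : [0,∞) → [0,∞) be a monotonically non-increasing function with ψ(t) → 0 as t → ∞. Define R_n = E[ψ(T)·T^n] / E[T^n]. Then R_n → 0 as n → ∞. -/
/-!
Fix `M > 0`. Splitting at `T = M` gives `ψ(T) T^n ≤ ψ(0) M^n + ψ(M) T^n`, so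
`R_n ≤ ψ(0) M^n / E[T^n] + ψ(M)`. For `c > M`, unbounded support gives `p = P(T > c) > 0`
and hence `E[T^n] ≥ c^n p`, so the first term is at most `ψ(0) (M/c)^n / p → 0`. Thus
`limsup R_n ≤ ψ(M)` for every `M > 0`, and `ψ(M) → 0`.
-/

open MeasureTheory Filter Topology Set

lemma AntitoneOn.nonneg_of_tendsto_atTop_zero {ψ : ℝ → ℝ} (hψ : AntitoneOn ψ (Ici 0))
    (hψ_lim : Tendsto ψ atTop (𝓝 0)) {t : ℝ} (ht : 0 ≤ t) : 0 ≤ ψ t :=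
  le_of_tendsto hψ_lim ((eventually_ge_atTop t).mono fun _ hs => hψ ht (ht.trans hs) hs)

lemma mul_pow_le_of_antitoneOn {ψ : ℝ → ℝ} (hψ : AntitoneOn ψ (Ici 0))
    (hψ_nonneg : ∀ t, 0 ≤ t → 0 ≤ ψ t) {t M : ℝ} (ht : 0 ≤ t) (hM : 0 ≤ M) (n : ℕ) :
    ψ t * t ^ n ≤ ψ 0 * M ^ n + ψ M * t ^ n := by
  rcases le_total t M with htM | hMt
  · calc ψ t * t ^ n ≤ ψ 0 * M ^ n :=
          mul_le_mul (hψ self_mem_Ici ht ht) (pow_le_pow_left₀ ht htM n) (pow_nonneg ht n)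
            (hψ_nonneg 0 le_rfl)
      _ ≤ ψ 0 * M ^ n + ψ M * t ^ n :=
          le_add_of_nonneg_right (mul_nonneg (hψ_nonneg M hM) (pow_nonneg ht n))
  · calc ψ t * t ^ n ≤ ψ M * t ^ n := mul_le_mul_of_nonneg_right (hψ hM ht hMt) (pow_nonneg ht n)
      _ ≤ ψ 0 * M ^ n + ψ M * t ^ n :=
          le_add_of_nonneg_left (mul_nonneg (hψ_nonneg 0 le_rfl) (pow_nonneg hM n))

section Moments

variable {Ω : Type*} {mΩ : MeasurableSpace Ω} {μ : Measure Ω} {X : Ω → ℝ}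

lemma pow_mul_measureReal_lt_le_integral_pow [IsFiniteMeasure μ] (hX : ∀ ω, 0 ≤ X ω) {n : ℕ}
    (hint : Integrable (fun ω => X ω ^ n) μ) {a : ℝ} (ha : 0 ≤ a) :
    a ^ n * μ.real {ω | a < X ω} ≤ ∫ ω, X ω ^ n ∂μ := by
  have hsub : {ω | a < X ω} ⊆ {ω | a ^ n ≤ X ω ^ n} := fun ω hω =>
    pow_le_pow_left₀ ha (le_of_lt hω) n
  calc a ^ n * μ.real {ω | a < X ω} ≤ a ^ n * μ.real {ω | a ^ n ≤ X ω ^ n} := by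
        gcongr; finiteness
    _ ≤ ∫ ω, X ω ^ n ∂μ :=
        mul_meas_ge_le_integral_of_nonneg (.of_forall fun ω => pow_nonneg (hX ω) n) hint _

lemma tendsto_pow_div_integral_pow_zero [IsFiniteMeasure μ] (hX : ∀ ω, 0 ≤ X ω)
    (hint : ∀ n : ℕ, Integrable (fun ω => X ω ^ n) μ) {M c : ℝ} (hM : 0 ≤ M) (hMc : M < c)
    (hc : 0 < μ {ω | c < X ω}) :
    Tendsto (fun n : ℕ => M ^ n / ∫ ω, X ω ^ n ∂μ) atTop (𝓝 0) := by
  set p := μ.real {ω | c < X ω}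
  have hp : 0 < p := ENNReal.toReal_pos hc.ne' (measure_ne_top μ _)
  have hc₀ : 0 < c := hM.trans_lt hMc
  have hbound : ∀ n : ℕ, M ^ n / ∫ ω, X ω ^ n ∂μ ≤ (M / c) ^ n / p := fun n => by
    calc M ^ n / ∫ ω, X ω ^ n ∂μ ≤ M ^ n / (c ^ n * p) :=
          div_le_div_of_nonneg_left (pow_nonneg hM n) (by positivity)
            (pow_mul_measureReal_lt_le_integral_pow hX (hint n) hc₀.le)
      _ = (M / c) ^ n / p := by rw [div_pow, div_div]
  have hgeo : Tendsto (fun n : ℕ => (M / c) ^ n / p) atTop (𝓝 0) := by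
    simpa using (tendsto_pow_atTop_nhds_zero_of_lt_one (div_nonneg hM hc₀.le)
      ((div_lt_one hc₀).2 hMc)).div_const p
  exact squeeze_zero (fun n => div_nonneg (pow_nonneg hM n)
    (integral_nonneg fun ω => pow_nonneg (hX ω) n)) hbound hgeo

lemma integral_mul_pow_le [IsProbabilityMeasure μ] (hX : ∀ ω, 0 ≤ X ω) {n : ℕ}
    (hint : Integrable (fun ω => X ω ^ n) μ) {ψ : ℝ → ℝ} (hψ : AntitoneOn ψ (Ici 0))
    (hψ_nonneg : ∀ t, 0 ≤ t → 0 ≤ ψ t) {M : ℝ} (hM : 0 ≤ M) :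
    ∫ ω, ψ (X ω) * X ω ^ n ∂μ ≤ ψ 0 * M ^ n + ψ M * ∫ ω, X ω ^ n ∂μ := by
  calc ∫ ω, ψ (X ω) * X ω ^ n ∂μ ≤ ∫ ω, (ψ 0 * M ^ n + ψ M * X ω ^ n) ∂μ :=
        integral_mono_of_nonneg
          (.of_forall fun ω => mul_nonneg (hψ_nonneg _ (hX ω)) (pow_nonneg (hX ω) n))
          ((integrable_const _).add (hint.const_mul _))
          (.of_forall fun ω => mul_pow_le_of_antitoneOn hψ hψ_nonneg (hX ω) hM n)
    _ = ψ 0 * M ^ n + ψ M * ∫ ω, X ω ^ n ∂μ := by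
        rw [integral_add (integrable_const _) (hint.const_mul _), integral_const,
          integral_const_mul, probReal_univ, one_smul]

lemma integral_mul_pow_div_integral_pow_le [IsProbabilityMeasure μ] (hX : ∀ ω, 0 ≤ X ω)
    {n : ℕ} (hint : Integrable (fun ω => X ω ^ n) μ) (hpos : 0 < ∫ ω, X ω ^ n ∂μ)
    {ψ : ℝ → ℝ} (hψ : AntitoneOn ψ (Ici 0)) (hψ_nonneg : ∀ t, 0 ≤ t → 0 ≤ ψ t) {M : ℝ}
    (hM : 0 ≤ M) :
    (∫ ω, ψ (X ω) * X ω ^ n ∂μ) / ∫ ω, X ω ^ n ∂μ ≤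
      ψ 0 * (M ^ n / ∫ ω, X ω ^ n ∂μ) + ψ M := by
  calc (∫ ω, ψ (X ω) * X ω ^ n ∂μ) / ∫ ω, X ω ^ n ∂μ
      ≤ (ψ 0 * M ^ n + ψ M * ∫ ω, X ω ^ n ∂μ) / ∫ ω, X ω ^ n ∂μ :=
        div_le_div_of_nonneg_right (integral_mul_pow_le hX hint hψ hψ_nonneg hM) hpos.le
    _ = ψ 0 * (M ^ n / ∫ ω, X ω ^ n ∂μ) + ψ M := by
        rw [add_div, mul_div_assoc, mul_div_cancel_right₀ _ hpos.ne']

end Moments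

theorem keat_moment_ratio_tendsto_zero_general
    {Ω : Type*} {mΩ : MeasurableSpace Ω} (μ : Measure Ω) [IsProbabilityMeasure μ]
    (T : Ω → ℝ) (hT_nonneg : ∀ ω, 0 ≤ T ω)
    (h_unbdd : ∀ M : ℝ, 0 < M → 0 < μ {ω | M < T ω})
    (ψ : ℝ → ℝ)
    (hψ_anti : ∀ s t, 0 ≤ s → s ≤ t → ψ t ≤ ψ s)
    (hψ_lim : Tendsto ψ atTop (nhds 0))
    (h_int : ∀ n : ℕ, Integrable (fun ω => T ω ^ n) μ)
    (R : ℕ → ℝ)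
    (hR : ∀ n : ℕ, R n = (∫ ω, ψ (T ω) * T ω ^ n ∂μ) / (∫ ω, T ω ^ n ∂μ)) :
    Tendsto R atTop (nhds 0) := by
  have hψ : AntitoneOn ψ (Ici 0) := fun s hs _ _ hst => hψ_anti s _ hs hst
  have hψ_nonneg : ∀ t, 0 ≤ t → 0 ≤ ψ t := fun _ => hψ.nonneg_of_tendsto_atTop_zero hψ_lim
  have hD : ∀ n, 0 < ∫ ω, T ω ^ n ∂μ := fun n => by
    have hp : 0 < μ.real {ω | 1 < T ω} :=
      ENNReal.toReal_pos (h_unbdd 1 one_pos).ne' (measure_ne_top μ _)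
    exact (mul_pos (pow_pos one_pos n) hp).trans_le
      (pow_mul_measureReal_lt_le_integral_pow hT_nonneg (h_int n) zero_le_one)
  have hR_nonneg : ∀ n, 0 ≤ R n := fun n => hR n ▸ div_nonneg
    (integral_nonneg fun ω => mul_nonneg (hψ_nonneg _ (hT_nonneg ω)) (pow_nonneg (hT_nonneg ω) n))
    (hD n).le
  refine tendsto_order.2 ⟨fun a ha => .of_forall fun n => ha.trans_le (hR_nonneg n),
    fun ε hε => ?_⟩
  obtain ⟨M, hM, hψM⟩ : ∃ M, 0 ≤ M ∧ ψ M < ε / 2 :=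
    ((eventually_ge_atTop 0).and (hψ_lim.eventually (gt_mem_nhds (half_pos hε)))).exists
  have hsmall := ((tendsto_pow_div_integral_pow_zero hT_nonneg h_int hM
    (lt_add_one M) (h_unbdd _ (by linarith))).const_mul (ψ 0)).eventually
    (gt_mem_nhds (show ψ 0 * 0 < ε / 2 by simpa using hε))
  filter_upwards [hsmall] with n hn
  calc R n ≤ ψ 0 * (M ^ n / ∫ ω, T ω ^ n ∂μ) + ψ M :=
        hR n ▸ integral_mul_pow_div_integral_pow_le hT_nonneg (h_int n) (hD n) hψ hψ_nonneg hM
    _ < ε := by linarith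

/-- **Vanishing of kernel-to-base moment ratios.**
If `T ≥ 0` has unbounded support (`P(T > M) > 0` for all `M > 0`) with all moments
`E[T^n]` finite, and `ψ : [0,∞) → [0,∞)` is monotonically non-increasing with
`ψ(t) → 0` as `t → ∞` (and `E[ψ(T)·T^n]` is a genuine expectation, i.e. integrable),
then `R n = E[ψ(T)·T^n] / E[T^n]` tends to `0` as `n → ∞`. -/
theorem keat_moment_ratio_tendsto_zero
    {Ω : Type*} {mΩ : MeasurableSpace Ω} (μ : Measure Ω) [IsProbabilityMeasure μ]
    (T : Ω → ℝ) (hT_nonneg : ∀ ω, 0 ≤ T ω)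
    (h_unbdd : ∀ M : ℝ, 0 < M → 0 < μ {ω | M < T ω})
    (ψ : ℝ → ℝ)
    (hψ_nonneg : ∀ t, 0 ≤ t → 0 ≤ ψ t)
    (hψ_anti : ∀ s t, 0 ≤ s → s ≤ t → ψ t ≤ ψ s)
    (hψ_lim : Tendsto ψ atTop (nhds 0))
    (h_int : ∀ n : ℕ, Integrable (fun ω => T ω ^ n) μ)
    (h_int' : ∀ n : ℕ, Integrable (fun ω => ψ (T ω) * T ω ^ n) μ)
    (R : ℕ → ℝ)
    (hR : ∀ n : ℕ, R n = (∫ ω, ψ (T ω) * T ω ^ n ∂μ) / (∫ ω, T ω ^ n ∂μ)) :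
    Tendsto R atTop (nhds 0) :=
  keat_moment_ratio_tendsto_zero_general (mΩ := mΩ) μ T hT_nonneg h_unbdd ψ hψ_anti hψ_lim h_int R
    hR
end
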